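/- arXiv:1207.2902 — 5 statements merged into one kernel-verified Lean document; each statement's English description precedes it below -/
import Mathlib

section
/- There is no explicit Runge–Kutta method with strictly positive weights satisfying the effective order five (classical order two) conditions. Precisely: for every integer s ≥ 1 there do not exist a strictly lower triangular matrix A ∈ ℝ^{s×s}, a vector b ∈ ℝ^s with bᵢ > 0 for all i, and a real number β₂ such that, with c = A·e (e the all-ones vector) and all vector powers and products taken componentwise, the following four equations hold simultaneously: bᵀe = 1, bᵀ(Ac) = 1/6, (1/2)·bᵀc² − 1/6 = β₂, and (1/4)·bᵀc⁴ − bᵀ(c²·(Ac)) + bᵀ(Ac)² = β₂². Consequently, any explicit Runge–Kutta method with positive weights has effective order at most four. -/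
/-!
Put `x = c²/2 - Ac`. The four conditions say exactly that, under the probability weights `b`,
the mean of `x` is `β₂` and its second moment is `β₂²`. So the variance of `x` vanishes, and as
all weights are positive, `x` is constant. For an explicit method the first stage has
`c = Ac = 0`, so that constant is `0`, and induction along the stages (the `i`-th entries of
`c` and `Ac` only see earlier stages) then gives `c = 0`. Hence `Ac = 0`, contradicting
`bᵀAc = 1/6`.
-/

open Finset Matrix

theorem eq_of_sum_mul_sq_eq_sq {ι : Type*} [Fintype ι] {w x : ι → ℝ} {m : ℝ}
    (hw : ∀ i, 0 < w i) (hw_sum : ∑ i, w i = 1) (hmean : ∑ i, w i * x i = m)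
    (hsq : ∑ i, w i * x i ^ 2 = m ^ 2) (i : ι) : x i = m := by
  have hvar : ∑ j, w j * (x j - m) ^ 2 = 0 :=
    calc ∑ j, w j * (x j - m) ^ 2
        = ∑ j, w j * x j ^ 2 - 2 * m * ∑ j, w j * x j + m ^ 2 * ∑ j, w j := by
          simp only [mul_sum, ← sum_sub_distrib, ← sum_add_distrib]
          exact sum_congr rfl fun j _ => by ring
      _ = 0 := by rw [hsq, hmean, hw_sum]; ring
  have hterm : w i * (x i - m) ^ 2 = 0 :=
    (sum_eq_zero_iff_of_nonneg fun j _ => mul_nonneg (hw j).le (sq_nonneg _)).mp hvar i (mem_univ i)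
  simpa [(hw i).ne', sub_eq_zero] using hterm

section LowerTriangular

variable {ι R : Type*} [Fintype ι] [LinearOrder ι]

theorem mulVec_apply_eq_zero_of_forall_lt [NonUnitalNonAssocSemiring R] {A : Matrix ι ι R}
    (hA : ∀ i j, i ≤ j → A i j = 0) {v : ι → R} {i : ι} (hv : ∀ j < i, v j = 0) :
    (A *ᵥ v) i = 0 := by
  simp only [mulVec, dotProduct]
  refine sum_eq_zero fun j _ => ?_
  rcases le_or_gt i j with hij | hji
  · rw [hA i j hij, zero_mul]
  · rw [hv j hji, mul_zero]

theorem mulVec_one_eq_zero_of_forall_sq_div_two_sub_eq {A : Matrix ι ι ℝ}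
    (hA : ∀ i j, i ≤ j → A i j = 0) {β : ℝ}
    (hx : ∀ i, (A *ᵥ 1) i ^ 2 / 2 - (A *ᵥ A *ᵥ 1) i = β) : A *ᵥ 1 = 0 := by
  funext i
  have : Nonempty ι := ⟨i⟩
  obtain ⟨i₀, hi₀⟩ := Finite.exists_min (id : ι → ι)
  have hβ : β = 0 := by
    have hmin : ∀ {v : ι → ℝ}, (A *ᵥ v) i₀ = 0 :=
      mulVec_apply_eq_zero_of_forall_lt hA fun j hj => absurd hj (hi₀ j).not_gt
    simpa [hmin] using (hx i₀).symm
  induction i using WellFoundedLT.induction with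
  | ind i ih =>
    have hAc : (A *ᵥ A *ᵥ 1) i = 0 := mulVec_apply_eq_zero_of_forall_lt hA ih
    simpa [hAc, hβ] using hx i

end LowerTriangular

theorem no_explicit_RK_positive_weights_effective_order_five_general (s : ℕ) :
    ¬ ∃ (A : Matrix (Fin s) (Fin s) ℝ) (b : Fin s → ℝ) (β₂ : ℝ),
      (∀ i j : Fin s, i ≤ j → A i j = 0) ∧
      (∀ i, 0 < b i) ∧
      (let c : Fin s → ℝ := A.mulVec (fun _ => 1);
       let Ac : Fin s → ℝ := A.mulVec c;
       (∑ i, b i) = 1 ∧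
       (∑ i, b i * Ac i) = 1 / 6 ∧
       (1 / 2) * (∑ i, b i * (c i) ^ 2) - 1 / 6 = β₂ ∧
       (1 / 4) * (∑ i, b i * (c i) ^ 4)
         - (∑ i, b i * ((c i) ^ 2 * Ac i))
         + (∑ i, b i * (Ac i) ^ 2) = β₂ ^ 2) := by
  rintro ⟨A, b, β₂, hA, hb, hb_sum, hbAc, hβ₂, hβ₂_sq⟩
  set c := A *ᵥ fun _ => 1
  have hmean : ∑ i, b i * (c i ^ 2 / 2 - (A *ᵥ c) i) = β₂ := by
    rw [← hβ₂, ← hbAc, mul_sum, ← sum_sub_distrib]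
    exact sum_congr rfl fun i _ => by ring
  have hsq : ∑ i, b i * (c i ^ 2 / 2 - (A *ᵥ c) i) ^ 2 = β₂ ^ 2 := by
    rw [← hβ₂_sq, mul_sum, ← sum_sub_distrib, ← sum_add_distrib]
    exact sum_congr rfl fun i _ => by ring
  have hc : c = 0 := mulVec_one_eq_zero_of_forall_sq_div_two_sub_eq hA
    (eq_of_sum_mul_sq_eq_sq hb hb_sum hmean hsq)
  rw [hc, mulVec_zero] at hbAc
  simp at hbAc

open Finset in
/-- There is no explicit Runge–Kutta method with strictly positive weights
satisfying the effective order five (classical order two) conditions. -/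
theorem no_explicit_RK_positive_weights_effective_order_five (s : ℕ) (hs : 1 ≤ s) :
    ¬ ∃ (A : Matrix (Fin s) (Fin s) ℝ) (b : Fin s → ℝ) (β₂ : ℝ),
      (∀ i j : Fin s, i ≤ j → A i j = 0) ∧
      (∀ i, 0 < b i) ∧
      (let c : Fin s → ℝ := A.mulVec (fun _ => 1);
       let Ac : Fin s → ℝ := A.mulVec c;
       (∑ i, b i) = 1 ∧
       (∑ i, b i * Ac i) = 1 / 6 ∧
       (1 / 2) * (∑ i, b i * (c i) ^ 2) - 1 / 6 = β₂ ∧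
       (1 / 4) * (∑ i, b i * (c i) ^ 4)
         - (∑ i, b i * ((c i) ^ 2 * Ac i))
         + (∑ i, b i * (Ac i) ^ 2) = β₂ ^ 2) :=
  no_explicit_RK_positive_weights_effective_order_five_general s
end

section
/- Let A ∈ ℝ^{s×s} be strictly lower triangular, b ∈ ℝ^s with bᵢ > 0 for all i, c = A·e, and β₂ ∈ ℝ, and suppose bᵀe = 1, bᵀ(Ac) = 1/6, (1/2)·bᵀc² − 1/6 = β₂, and (1/4)·bᵀc⁴ − bᵀ(c²·(Ac)) + bᵀ(Ac)² = β₂². Then β₂ = 0 and (1/2)cᵢ² = (Ac)ᵢ for every i, i.e., the method has stage order two. -/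
/-!
Put `d := c²/2 - A c`, the stage order two defect. The hypotheses say that, for the probability
weights `b`, the mean of `d` is `β₂` and its second moment is `β₂²`; so its variance
`∑ bᵢ (dᵢ - β₂)²` vanishes, and positivity of the weights forces `d ≡ β₂`. The first stage of an
explicit method has `c₁ = (A c)₁ = 0`, hence `d₁ = 0` and `β₂ = 0`.
-/

open Finset Matrix

theorem eq_of_weighted_sum_sq_eq {ι : Type*} [Fintype ι] {w d : ι → ℝ} {m : ℝ}
    (hw : ∀ i, 0 < w i) (hw1 : ∑ i, w i = 1)
    (hd : ∑ i, w i * d i = m) (hd2 : ∑ i, w i * d i ^ 2 = m ^ 2) (i : ι) :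
    d i = m := by
  have hvar : ∑ i, w i * (d i - m) ^ 2 = 0 := by
    calc ∑ i, w i * (d i - m) ^ 2
        = ∑ i, w i * d i ^ 2 - 2 * m * ∑ i, w i * d i + m ^ 2 * ∑ i, w i := by
          simp only [mul_sum, ← sum_sub_distrib, ← sum_add_distrib]
          exact sum_congr rfl fun _ _ => by ring
      _ = 0 := by rw [hd, hd2, hw1]; ring
  have hterm := (sum_eq_zero_iff_of_nonneg fun j _ => mul_nonneg (hw j).le (sq_nonneg _)).mp
    hvar i (mem_univ i)
  exact sub_eq_zero.mp <|
    (pow_eq_zero_iff two_ne_zero).mp ((mul_eq_zero_iff_left (hw i).ne').mp hterm)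

theorem mulVec_apply_eq_zero_of_isBot {n R : Type*} [Fintype n] [Preorder n]
    [NonUnitalNonAssocSemiring R] {A : Matrix n n R} (hA : ∀ i j, i ≤ j → A i j = 0)
    (v : n → R) {i : n} (hi : IsBot i) : (A *ᵥ v) i = 0 :=
  sum_eq_zero fun j _ => by
    change A i j * v j = 0
    rw [hA i j (hi j), zero_mul]

section Defect

variable {ι : Type*} [Fintype ι] (A : Matrix ι ι ℝ) (b c : ι → ℝ)

noncomputable def stageOrderTwoDefect (i : ι) : ℝ := (1 / 2) * c i ^ 2 - (A *ᵥ c) i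

theorem sum_mul_stageOrderTwoDefect :
    ∑ i, b i * stageOrderTwoDefect A c i
      = (1 / 2) * ∑ i, b i * c i ^ 2 - ∑ i, b i * (A *ᵥ c) i := by
  rw [mul_sum, ← sum_sub_distrib]
  exact sum_congr rfl fun _ _ => by unfold stageOrderTwoDefect; ring

theorem sum_mul_stageOrderTwoDefect_sq :
    ∑ i, b i * stageOrderTwoDefect A c i ^ 2
      = (1 / 4) * ∑ i, b i * c i ^ 4 - ∑ i, b i * (c i ^ 2 * (A *ᵥ c) i)
        + ∑ i, b i * (A *ᵥ c) i ^ 2 := by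
  rw [mul_sum, ← sum_sub_distrib, ← sum_add_distrib]
  exact sum_congr rfl fun _ _ => by unfold stageOrderTwoDefect; ring

end Defect

open Finset in
/-- The effective order five, classical order two conditions with positive
weights force stage order two. -/
theorem effective_order_five_forces_stage_order_two (s : ℕ)
    (A : Matrix (Fin s) (Fin s) ℝ) (b : Fin s → ℝ) (c : Fin s → ℝ) (β₂ : ℝ)
    (hA : ∀ i j : Fin s, i ≤ j → A i j = 0)
    (hb : ∀ i, 0 < b i)
    (hc : c = A.mulVec (fun _ => 1))
    (h1 : ∑ i, b i = 1)
    (h4 : ∑ i, b i * A.mulVec c i = 1 / 6)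
    (h3 : (1 / 2) * (∑ i, b i * (c i) ^ 2) - 1 / 6 = β₂)
    (h5 : (1 / 4) * (∑ i, b i * (c i) ^ 4)
      - (∑ i, b i * ((c i) ^ 2 * A.mulVec c i))
      + (∑ i, b i * (A.mulVec c i) ^ 2) = β₂ ^ 2) :
    β₂ = 0 ∧ ∀ i, (1 / 2) * (c i) ^ 2 = A.mulVec c i := by
  have hmean : ∑ i, b i * stageOrderTwoDefect A c i = β₂ := by
    rw [sum_mul_stageOrderTwoDefect, h4, h3]
  have hsecond : ∑ i, b i * stageOrderTwoDefect A c i ^ 2 = β₂ ^ 2 := by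
    rw [sum_mul_stageOrderTwoDefect_sq, h5]
  have hconst := eq_of_weighted_sum_sq_eq hb h1 hmean hsecond
  have hs : 0 < s := Nat.pos_of_ne_zero (by rintro rfl; simp at h1)
  have hfirst : IsBot (⟨0, hs⟩ : Fin s) := fun j => Nat.zero_le j
  have hβ : β₂ = 0 := by
    have hc₀ : c ⟨0, hs⟩ = 0 := hc ▸ mulVec_apply_eq_zero_of_isBot hA _ hfirst
    have hAc₀ := mulVec_apply_eq_zero_of_isBot hA c hfirst
    rw [← hconst ⟨0, hs⟩, stageOrderTwoDefect, hc₀, hAc₀]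
    ring
  refine ⟨hβ, fun i => sub_eq_zero.mp ?_⟩
  rw [← hβ, ← hconst i, stageOrderTwoDefect]
end

section
/- SSP property of the three-stage family of Theorem 5.1: for every γ with 1/4 ≤ γ ≤ 1, the explicit three-stage Runge–Kutta method with coefficient matrix A ∈ ℝ^{3×3} given by a₂₁ = 1, a₃₁ = a₃₂ = γ (all other entries zero) and weights b = ((5γ−1)/(6γ), 1/6, 1/(6γ)) satisfies the absolute monotonicity conditions with r = 1: the matrix I + rA is invertible, K(I + rA)^{-1} ≥ 0 componentwise, and e₄ − r·K(I + rA)^{-1}e₃ ≥ 0 componentwise, where K ∈ ℝ^{4×3} is the matrix whose first three rows are A and whose last row is bᵀ, and e₃ ∈ ℝ³, e₄ ∈ ℝ⁴ are all-ones vectors. Hence the method has SSP coefficient at least 1. -/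
/-! With `r = 1`, `I + A` is unit lower triangular, so `K (I + A)⁻¹` is computed exactly: its
upper block is `A (I + A)⁻¹ = !![0, 0, 0; 1, 0, 0; 0, γ, 0]` and its last row is
`bᵀ (I + A)⁻¹ = ((4γ - 1)/(6γ), 0, 1/(6γ))`. Its entries are nonnegative because `γ ≥ 1/4`, and its
row sums `0, 1, γ, 2/3` are at most `1` because `γ ≤ 1`. -/

open Finset in
/-- The matrix stacking `A` on top of `bᵀ`. -/
def rkStack {s : ℕ} (A : Matrix (Fin s) (Fin s) ℝ) (b : Fin s → ℝ) :
    Matrix (Fin (s + 1)) (Fin s) ℝ :=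
  Matrix.of fun i j => if h : (i : ℕ) < s then A ⟨i, h⟩ j else b j

open Matrix

theorem rkStack_mul {s : ℕ} (A M : Matrix (Fin s) (Fin s) ℝ) (b : Fin s → ℝ) :
    rkStack A b * M = rkStack (A * M) (b ᵥ* M) := by
  ext i j
  by_cases h : (i : ℕ) < s <;> simp [rkStack, mul_apply, vecMul, dotProduct, h]

theorem rkStack_apply_of_forall {s : ℕ} {A : Matrix (Fin s) (Fin s) ℝ} {b : Fin s → ℝ}
    {p : (Fin s → ℝ) → Prop} (hA : ∀ i, p (A i)) (hb : p b) (i : Fin (s + 1)) :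
    p (rkStack A b i) := by
  by_cases h : (i : ℕ) < s
  · convert hA ⟨i, h⟩ using 1
    ext j; simp [rkStack, h]
  · convert hb using 1
    ext j; simp [rkStack, h]

theorem Matrix.det_unitLowerTriangular_fin_three (a c d : ℝ) :
    !![1, 0, 0; a, 1, 0; c, d, 1].det = 1 := by
  simp [det_fin_three]

theorem Matrix.inv_unitLowerTriangular_fin_three (a c d : ℝ) :
    !![1, 0, 0; a, 1, 0; c, d, 1]⁻¹ = !![1, 0, 0; -a, 1, 0; a * d - c, -d, 1] := by
  refine inv_eq_left_inv ?_
  ext i j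
  fin_cases i <;> fin_cases j <;> simp [mul_apply, Fin.sum_univ_three]; ring

open Finset in
/-- SSP property of the three-stage family of Theorem 5.1: the absolute
monotonicity conditions hold with r = 1. -/
theorem essprk332_family_absolutely_monotonic (γ : ℝ) (h₁ : 1 / 4 ≤ γ) (h₂ : γ ≤ 1) :
    let A : Matrix (Fin 3) (Fin 3) ℝ := !![0, 0, 0; 1, 0, 0; γ, γ, 0]
    let b : Fin 3 → ℝ := ![(5 * γ - 1) / (6 * γ), 1 / 6, 1 / (6 * γ)]
    let r : ℝ := 1
    let K := rkStack A b
    IsUnit (1 + r • A).det ∧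
    (∀ i j, 0 ≤ (K * (1 + r • A)⁻¹) i j) ∧
    (∀ i : Fin 4, 0 ≤ 1 - r * ((K * (1 + r • A)⁻¹).mulVec (fun _ => 1)) i) := by
  intro A b r K
  have hγ : 0 < γ := by linarith
  have hM : 1 + r • A = !![1, 0, 0; 1, 1, 0; γ, γ, 1] := by simp [A, r, one_fin_three]
  have hKM : K * (1 + r • A)⁻¹ =
      rkStack !![0, 0, 0; 1, 0, 0; 0, γ, 0] ![(4 * γ - 1) / (6 * γ), 0, 1 / (6 * γ)] := by
    rw [hM, inv_unitLowerTriangular_fin_three, rkStack_mul]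
    congr 1
    · ext i j
      fin_cases i <;> fin_cases j <;> simp [A, mul_apply, Fin.sum_univ_three]
    · ext j
      fin_cases j <;> simp [b, vecMul, dotProduct, Fin.sum_univ_three] <;> field_simp <;> ring
  refine ⟨by simp [hM, det_unitLowerTriangular_fin_three], fun i j => ?_, fun i => ?_⟩
  · rw [hKM]
    refine rkStack_apply_of_forall (p := fun row => ∀ j, 0 ≤ row j)
      (fun i j => ?_) (fun j => ?_) i j
    · fin_cases i <;> fin_cases j <;> simp [hγ.le]
    · fin_cases j <;> simp [hγ.le]
      exact div_nonneg (by linarith) (by positivity)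
  · rw [hKM, sub_nonneg, one_mul]
    refine rkStack_apply_of_forall (p := fun row => row ⬝ᵥ (fun _ => 1) ≤ 1) (fun i => ?_) ?_ i
    · fin_cases i <;> simp [dotProduct, Fin.sum_univ_three, h₂]
    · simp [dotProduct, Fin.sum_univ_three]
      field_simp
      linarith
end

section
/- Optimality bound for three-stage effective order three methods: there is no strictly lower triangular matrix A ∈ ℝ^{3×3} and vector b ∈ ℝ³ such that, with c = A·e, the order conditions bᵀe = 1, bᵀc = 1/2, bᵀ(Ac) = 1/6 hold and the absolute monotonicity conditions hold at some r > 1 (I + rA invertible, K(I + rA)^{-1} ≥ 0 componentwise, and e₄ − r·K(I + rA)^{-1}e₃ ≥ 0 componentwise, where K stacks A on top of bᵀ). Hence the SSP coefficient of any three-stage method of effective order three is at most 1, and the family of Theorem 5.1 is optimal. -/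
open Matrix

section rkStack

variable {s m : ℕ} (A : Matrix (Fin s) (Fin s) ℝ) (b : Fin s → ℝ) (M : Matrix (Fin s) (Fin m) ℝ)

theorem rkStack_mul_castSucc (i : Fin s) : (rkStack A b * M) i.castSucc = (A * M) i := by
  ext j
  simp [rkStack, Matrix.mul_apply]

theorem rkStack_mul_last : (rkStack A b * M) (Fin.last s) = b ᵥ* M := by
  ext j
  simp [rkStack, Matrix.mul_apply, Matrix.vecMul, dotProduct]

theorem rkStack_mul_mulVec_castSucc (v : Fin m → ℝ) (i : Fin s) :
    ((rkStack A b * M) *ᵥ v) i.castSucc = ((A * M) *ᵥ v) i := by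
  simp only [Matrix.mulVec, rkStack_mul_castSucc]

end rkStack

theorem exists_eq_of_strictLowerTriangular_three (A : Matrix (Fin 3) (Fin 3) ℝ)
    (hA : ∀ i j : Fin 3, i ≤ j → A i j = 0) :
    ∃ a₂₁ a₃₁ a₃₂ : ℝ, A = !![0, 0, 0; a₂₁, 0, 0; a₃₁, a₃₂, 0] := by
  refine ⟨A 1 0, A 2 0, A 2 1, ?_⟩
  ext i j
  fin_cases i <;> fin_cases j <;> simp <;> exact hA _ _ (by decide)

section lowerThree

variable (a₂₁ a₃₁ a₃₂ r : ℝ)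

theorem inv_one_add_smul_lowerThree :
    (1 + r • !![0, 0, 0; a₂₁, 0, 0; a₃₁, a₃₂, 0])⁻¹ =
      !![1, 0, 0; -(r * a₂₁), 1, 0; r ^ 2 * a₃₂ * a₂₁ - r * a₃₁, -(r * a₃₂), 1] := by
  apply Matrix.inv_eq_right_inv
  ext i j
  fin_cases i <;> fin_cases j
  all_goals simp [Matrix.mul_apply, Fin.sum_univ_three]
  all_goals ring

theorem lowerThree_mul_inv_one_add_smul :
    !![0, 0, 0; a₂₁, 0, 0; a₃₁, a₃₂, 0] * (1 + r • !![0, 0, 0; a₂₁, 0, 0; a₃₁, a₃₂, 0])⁻¹ =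
      !![0, 0, 0; a₂₁, 0, 0; a₃₁ - r * a₂₁ * a₃₂, a₃₂, 0] := by
  rw [inv_one_add_smul_lowerThree]
  ext i j
  fin_cases i <;> fin_cases j
  all_goals simp [Matrix.mul_apply, Fin.sum_univ_three]
  all_goals ring

theorem vecMul_inv_one_add_smul_lowerThree (b : Fin 3 → ℝ) :
    b ᵥ* (1 + r • !![0, 0, 0; a₂₁, 0, 0; a₃₁, a₃₂, 0])⁻¹ =
      ![b 0 - r * a₂₁ * b 1 + (r ^ 2 * a₃₂ * a₂₁ - r * a₃₁) * b 2, b 1 - r * b 2 * a₃₂, b 2] := by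
  rw [inv_one_add_smul_lowerThree]
  ext j
  fin_cases j <;> simp [Matrix.vecMul, dotProduct, Fin.sum_univ_three] <;> ring

theorem lowerThree_mulVec_one :
    !![0, 0, 0; a₂₁, 0, 0; a₃₁, a₃₂, 0] *ᵥ (fun _ => 1) = ![0, a₂₁, a₃₁ + a₃₂] := by
  ext i
  fin_cases i <;> simp [Matrix.mulVec, dotProduct, Fin.sum_univ_three]

theorem lowerThree_mulVec_mulVec_one :
    !![0, 0, 0; a₂₁, 0, 0; a₃₁, a₃₂, 0] *ᵥ (!![0, 0, 0; a₂₁, 0, 0; a₃₁, a₃₂, 0] *ᵥ (fun _ => 1)) =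
      ![0, 0, a₃₂ * a₂₁] := by
  rw [lowerThree_mulVec_one]
  ext i
  fin_cases i <;> simp [Matrix.mulVec, dotProduct, Fin.sum_univ_three]

end lowerThree

theorem le_one_of_entry_bounds {a₂₁ a₃₁ a₃₂ b₂ b₃ r : ℝ} (ha₂₁ : 0 ≤ a₂₁) (ha₃₂ : 0 ≤ a₃₂)
    (hb₃ : 0 ≤ b₃) (ha₃₁ : r * a₂₁ * a₃₂ ≤ a₃₁) (hb₂ : r * b₃ * a₃₂ ≤ b₂) (hra₂₁ : r * a₂₁ ≤ 1)
    (hc : b₂ * a₂₁ + b₃ * (a₃₁ + a₃₂) = 1 / 2) (hAc : b₃ * (a₃₂ * a₂₁) = 1 / 6) : r ≤ 1 := by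
  have : r / 2 ≤ 1 / 2 := calc
    r / 2 = (r * b₃ * a₃₂) * a₂₁ + b₃ * (r * a₂₁ * a₃₂) + (r * a₂₁) * (b₃ * a₃₂) := by
      linear_combination (-3 * r) * hAc
    _ ≤ b₂ * a₂₁ + b₃ * a₃₁ + 1 * (b₃ * a₃₂) := by gcongr
    _ = 1 / 2 := by linear_combination hc
  linarith

open Finset in
/-- Optimality bound: no three-stage explicit method satisfying the effective
order three conditions is absolutely monotonic at any r > 1. -/
theorem essprk332_optimality :
    ¬ ∃ (A : Matrix (Fin 3) (Fin 3) ℝ) (b : Fin 3 → ℝ) (r : ℝ),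
      (∀ i j : Fin 3, i ≤ j → A i j = 0) ∧
      (let c : Fin 3 → ℝ := A.mulVec (fun _ => 1);
       (∑ i, b i) = 1 ∧
       (∑ i, b i * c i) = 1 / 2 ∧
       (∑ i, b i * A.mulVec c i) = 1 / 6) ∧
      1 < r ∧
      IsUnit (1 + r • A).det ∧
      (∀ i j, 0 ≤ (rkStack A b * (1 + r • A)⁻¹) i j) ∧
      (∀ i : Fin 4,
        0 ≤ 1 - r * ((rkStack A b * (1 + r • A)⁻¹).mulVec (fun _ => 1)) i) := by
  rintro ⟨A, b, r, hlow, ⟨-, hc, hAc⟩, hr, -, hP, he⟩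
  obtain ⟨a₂₁, a₃₁, a₃₂, rfl⟩ := exists_eq_of_strictLowerTriangular_three A hlow
  have hQ := fun i j => hP (Fin.castSucc i) j
  have hq := hP (Fin.last 3)
  simp only [rkStack_mul_castSucc, lowerThree_mul_inv_one_add_smul] at hQ
  simp only [rkStack_mul_last, vecMul_inv_one_add_smul_lowerThree] at hq
  have hra₂₁ : r * a₂₁ ≤ 1 := by
    have h := he (Fin.castSucc 1)
    rw [rkStack_mul_mulVec_castSucc, lowerThree_mul_inv_one_add_smul] at h
    simpa [Matrix.mulVec, Fin.sum_univ_three] using h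
  rw [lowerThree_mulVec_one] at hc
  rw [lowerThree_mulVec_mulVec_one] at hAc
  refine hr.not_ge (le_one_of_entry_bounds (by simpa using hQ 1 0) (by simpa using hQ 2 1)
    (by simpa using hq 2) (by simpa using hQ 2 0) (by simpa using hq 1) hra₂₁
    (by simpa [Fin.sum_univ_three] using hc) (by simpa [Fin.sum_univ_three] using hAc))
end

section
/- Order conditions for the four-stage family of Theorem 5.2: for every real γ ≠ 0, the explicit four-stage Runge–Kutta method with coefficient matrix A ∈ ℝ^{4×4} given by a₂₁ = 1/2, a₃₁ = a₃₂ = 1/2, a₄₁ = a₄₂ = a₄₃ = γ (all other entries zero) and weights b = ((8γ−1)/(12γ), 1/6, 1/6, 1/(12γ)) satisfies, with c = A·e = (0, 1/2, 1, 3γ), the conditions bᵀe = 1, bᵀc = 1/2, and bᵀ(Ac) = 1/6 (the conditions for effective order three with classical order two). -/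
theorem Matrix.mulVec_strictLowerTriangular_fin_four {R : Type*} [NonUnitalNonAssocSemiring R]
    (a₂₁ a₃₁ a₃₂ a₄₁ a₄₂ a₄₃ : R) (v : Fin 4 → R) :
    Matrix.mulVec !![0, 0, 0, 0; a₂₁, 0, 0, 0; a₃₁, a₃₂, 0, 0; a₄₁, a₄₂, a₄₃, 0] v =
      ![0, a₂₁ * v 0, a₃₁ * v 0 + a₃₂ * v 1, a₄₁ * v 0 + a₄₂ * v 1 + a₄₃ * v 2] := by
  ext i
  fin_cases i <;> simp [Matrix.mulVec, dotProduct, Fin.sum_univ_four, add_assoc]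

open Finset in
/-- Order conditions for the four-stage family of Theorem 5.2. -/
theorem essprk432_family_order_conditions (γ : ℝ) (hγ : γ ≠ 0) :
    let A : Matrix (Fin 4) (Fin 4) ℝ :=
      !![0, 0, 0, 0; 1/2, 0, 0, 0; 1/2, 1/2, 0, 0; γ, γ, γ, 0]
    let b : Fin 4 → ℝ := ![(8 * γ - 1) / (12 * γ), 1 / 6, 1 / 6, 1 / (12 * γ)]
    let c : Fin 4 → ℝ := A.mulVec (fun _ => 1)
    c = ![0, 1 / 2, 1, 3 * γ] ∧
    (∑ i, b i) = 1 ∧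
    (∑ i, b i * c i) = 1 / 2 ∧
    (∑ i, b i * A.mulVec c i) = 1 / 6 := by
  intro A b c
  have hc : c = ![0, 1 / 2, 1, 3 * γ] := by
    simp only [c, A, Matrix.mulVec_strictLowerTriangular_fin_four]
    ext i
    fin_cases i <;> simp <;> ring
  have hAc : A.mulVec c = ![0, 0, 1 / 4, 3 * γ / 2] := by
    simp only [hc, A, Matrix.mulVec_strictLowerTriangular_fin_four]
    ext i
    fin_cases i <;> simp <;> ring
  refine ⟨hc, ?_, ?_, ?_⟩
  · simp [b, Fin.sum_univ_four]
    field_simp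
    ring
  · simp [hc, b, Fin.sum_univ_four]
    field_simp
    ring
  · simp [hAc, b, Fin.sum_univ_four]
    field_simp
    ring
end
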